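/- arXiv:1406.6240 — 3 statements merged into one kernel-verified Lean document; each statement's English description precedes it below -/
import Mathlib

section
/- Let E be a real inner product space of finite dimension n ≥ 1, let m ≥ 1, and let v₁, …, v_m ∈ E be pairwise orthogonal vectors (⟨v_i, v_j⟩ = 0 for i ≠ j). Then ∑_{1 ≤ i < j ≤ m} ‖v_i‖² ‖v_j‖² ≤ ((n−1)/(2n)) · (∑_{i=1}^m ‖v_i‖²)². -/
/-!
Writing `a i = ‖v i‖ ^ 2`, the left-hand side is `((∑ a) ^ 2 - ∑ a ^ 2) / 2`. Nonzero orthogonal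
vectors are linearly independent, so at most `n` of the `a i` are nonzero, and Cauchy–Schwarz on
that support gives `(∑ a) ^ 2 ≤ n * ∑ a ^ 2`, which rearranges to the claim.
-/

open scoped RealInnerProductSpace

open Finset Module

theorem sq_sum_eq_sum_sq_add_two_mul_sum_sum_Ioi {ι R : Type*} [Fintype ι] [LinearOrder ι]
    [LocallyFiniteOrderTop ι] [LocallyFiniteOrderBot ι] [CommSemiring R] (a : ι → R) :
    (∑ i, a i) ^ 2 = ∑ i, a i ^ 2 + 2 * ∑ i, ∑ j ∈ Ioi i, a i * a j := by
  have row_split (i : ι) : ∑ j, a i * a j =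
      ∑ j ∈ Iio i, a i * a j + (a i ^ 2 + ∑ j ∈ Ioi i, a i * a j) := by
    rw [sq, add_sum_Ioi_eq_sum_Ici (f := fun j => a i * a j), ← filter_gt_eq_Iio,
      ← filter_le_eq_Ici, ← sum_filter_add_sum_filter_not univ (· < i)]
    simp only [not_lt]
  have sum_Iio_eq_sum_Ioi : ∑ i, ∑ j ∈ Iio i, a i * a j = ∑ i, ∑ j ∈ Ioi i, a i * a j := by
    rw [sum_comm' (t' := univ) (s' := Ioi) (by simp)]
    simp_rw [mul_comm]
  rw [sq, sum_mul_sum]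
  simp_rw [row_split]
  rw [sum_add_distrib, sum_add_distrib, sum_Iio_eq_sum_Ioi]
  ring

theorem sq_sum_le_card_filter_ne_zero_mul_sum_sq {ι R : Type*} [Semiring R] [LinearOrder R]
    [IsStrictOrderedRing R] [ExistsAddOfLE R] (s : Finset ι) (f : ι → R) [DecidablePred (f · ≠ 0)] :
    (∑ i ∈ s, f i) ^ 2 ≤ #{i ∈ s | f i ≠ 0} * ∑ i ∈ s, f i ^ 2 := by
  have hsq : ∑ i ∈ s with f i ≠ 0, f i ^ 2 = ∑ i ∈ s, f i ^ 2 :=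
    sum_filter_of_ne fun _ _ h hf => h (by rw [hf, sq, zero_mul])
  rw [← sum_filter_ne_zero s, ← hsq]
  exact sq_sum_le_card_mul_sum_sq

theorem card_filter_ne_zero_le_finrank_of_inner_eq_zero {𝕜 E ι : Type*} [RCLike 𝕜]
    [NormedAddCommGroup E] [InnerProductSpace 𝕜 E] [FiniteDimensional 𝕜 E] [Fintype ι]
    {v : ι → E} [DecidablePred fun i => v i ≠ 0]
    (ho : Pairwise fun i j => inner 𝕜 (v i) (v j) = 0) :
    #{i | v i ≠ 0} ≤ finrank 𝕜 E := by
  have hli : LinearIndependent 𝕜 fun i : {i // v i ≠ 0} => v i :=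
    linearIndependent_of_ne_zero_of_inner_eq_zero (fun i => i.2)
      fun i j hij => ho (Subtype.coe_injective.ne hij)
  simpa [Fintype.card_subtype] using hli.fintype_card_le_finrank

theorem sq_sum_norm_sq_le_finrank_mul_sum_sq_norm_sq {𝕜 E ι : Type*} [RCLike 𝕜]
    [NormedAddCommGroup E] [InnerProductSpace 𝕜 E] [FiniteDimensional 𝕜 E] [Fintype ι]
    {v : ι → E} (ho : Pairwise fun i j => inner 𝕜 (v i) (v j) = 0) :
    (∑ i, ‖v i‖ ^ 2) ^ 2 ≤ finrank 𝕜 E * ∑ i, (‖v i‖ ^ 2) ^ 2 := by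
  classical
  calc (∑ i, ‖v i‖ ^ 2) ^ 2 ≤ #{i | ‖v i‖ ^ 2 ≠ 0} * ∑ i, (‖v i‖ ^ 2) ^ 2 :=
        sq_sum_le_card_filter_ne_zero_mul_sum_sq _ _
    _ ≤ finrank 𝕜 E * ∑ i, (‖v i‖ ^ 2) ^ 2 := by
        gcongr
        simpa using card_filter_ne_zero_le_finrank_of_inner_eq_zero ho

theorem stmt_6_general (E : Type*) [NormedAddCommGroup E] [InnerProductSpace ℝ E]
    (n : ℕ) (hn : 1 ≤ n) (hdim : Module.finrank ℝ E = n)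
    (m : ℕ) (v : Fin m → E)
    (horth : ∀ i j : Fin m, i ≠ j → ⟪v i, v j⟫ = 0) :
    ∑ i : Fin m, ∑ j ∈ Finset.Ioi i, ‖v i‖ ^ 2 * ‖v j‖ ^ 2 ≤
      ((n - 1 : ℝ) / (2 * n)) * (∑ i : Fin m, ‖v i‖ ^ 2) ^ 2 := by
  have : FiniteDimensional ℝ E := Module.finite_of_finrank_pos (by omega)
  have hsq := sq_sum_eq_sum_sq_add_two_mul_sum_sum_Ioi fun i => ‖v i‖ ^ 2
  have hle := sq_sum_norm_sq_le_finrank_mul_sum_sq_norm_sq (𝕜 := ℝ) horth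
  rw [hdim] at hle
  have hn' : (0 : ℝ) < n := by exact_mod_cast hn
  rw [div_mul_eq_mul_div, le_div_iff₀ (by positivity)]
  nlinarith

theorem stmt_6 (E : Type*) [NormedAddCommGroup E] [InnerProductSpace ℝ E]
    (n : ℕ) (hn : 1 ≤ n) (hdim : Module.finrank ℝ E = n)
    (m : ℕ) (hm : 1 ≤ m) (v : Fin m → E)
    (horth : ∀ i j : Fin m, i ≠ j → ⟪v i, v j⟫ = 0) :
    ∑ i : Fin m, ∑ j ∈ Finset.Ioi i, ‖v i‖ ^ 2 * ‖v j‖ ^ 2 ≤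
      ((n - 1 : ℝ) / (2 * n)) * (∑ i : Fin m, ‖v i‖ ^ 2) ^ 2 :=
  stmt_6_general E n hn hdim m v horth
end

section
/- Let c > 0. Then ∫₀^π ( 2·c·tan(s/2) / (1 + c²·tan²(s/2)) )⁴ ds = π·c·(c² + 4c + 1) / (c + 1)⁴. -/
/-!
By the half-angle formulas the integrand is `(λ² sin s)⁴`, where `λ² = 2c / D`,
`D = 1 + cos s + c² (1 - cos s)`, is the derivative of the profile `α`. Reducing `1 / Dᵏ`
(`k = 2, 3, 4`) against the derivatives of `sin s / Dᵏ` gives an explicit primitive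
`(16 c⁴ s + c (1 + c²) ((1 + c²)² - 12 c²) α s) / (1 - c²)⁴ + sin s · R (cos s)`
with `R` rational. Since `α 0 = 0` and `α π = π`, only the first part contributes at the
endpoints. At `c = 1` this primitive degenerates, but there the integrand is just `sin⁴ s`.
-/

open Real

/-- The paper's dilation is `λ² = 2 * c / dilationDenom c s`. -/
noncomputable def dilationDenom (c s : ℝ) : ℝ := 1 + cos s + c ^ 2 * (1 - cos s)

/-- The profile `2 * arctan (c * tan (s / 2))` on `(-π, π)`, rewritten with the arctan subtraction
formula so that it is smooth on all of `ℝ`. -/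
noncomputable def profile (c s : ℝ) : ℝ :=
  s + 2 * arctan ((c - 1) * sin s / (1 + cos s + c * (1 - cos s)))

@[simp] lemma profile_zero (c : ℝ) : profile c 0 = 0 := by simp [profile]

@[simp] lemma profile_pi (c : ℝ) : profile c π = π := by simp [profile]

lemma one_sub_sq_ne_zero {c : ℝ} (hc : 0 ≤ c) (hc1 : c ≠ 1) : 1 - c ^ 2 ≠ 0 :=
  sub_ne_zero.2 fun h => hc1 ((pow_eq_one_iff_of_nonneg hc two_ne_zero).1 h.symm)

lemma one_add_cos_add_mul_one_sub_cos_pos {a : ℝ} (ha : 0 < a) (s : ℝ) :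
    0 < 1 + cos s + a * (1 - cos s) := by
  rcases (neg_one_le_cos s).eq_or_lt with h | h
  · rw [← h]; linarith
  · nlinarith [cos_le_one s]

lemma dilationDenom_pos {c : ℝ} (hc : c ≠ 0) (s : ℝ) : 0 < dilationDenom c s :=
  one_add_cos_add_mul_one_sub_cos_pos (by positivity) s

lemma continuous_dilationDenom (c : ℝ) : Continuous (dilationDenom c) := by
  unfold dilationDenom
  fun_prop

lemma two_mul_tan_half_div_eq (c s : ℝ) :
    2 * c * tan (s / 2) / (1 + c ^ 2 * tan (s / 2) ^ 2) = 2 * c * sin s / dilationDenom c s := by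
  have hsin := sin_eq_two_mul_tan_half_div_one_add_tan_half_sq s
  by_cases hcos : cos s = -1
  · -- `cos (s / 2) = 0`, so `tan (s / 2)` takes the junk value `0`
    have hs : sin s = 0 := by nlinarith [sin_sq_add_cos_sq s]
    have ht : tan (s / 2) = 0 := by
      rw [hs, eq_comm, div_eq_zero_iff] at hsin
      simpa [(by positivity : 1 + tan (s / 2) ^ 2 ≠ 0)] using hsin
    simp [ht, hs]
  · rw [dilationDenom, hsin, cos_eq_two_mul_tan_half_div_one_sub_tan_half_sq s hcos]
    generalize tan (s / 2) = t
    have hD : 1 + (1 - t ^ 2) / (1 + t ^ 2) + c ^ 2 * (1 - (1 - t ^ 2) / (1 + t ^ 2)) =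
        2 * (1 + c ^ 2 * t ^ 2) / (1 + t ^ 2) := by
      field_simp
      ring
    rw [hD]
    field_simp

lemma hasDerivAt_profile {c : ℝ} (hc : 0 < c) (s : ℝ) :
    HasDerivAt (profile c) (2 * c / dilationDenom c s) s := by
  have hE := one_add_cos_add_mul_one_sub_cos_pos hc s
  have hD := dilationDenom_pos hc.ne' s
  have hE' : HasDerivAt (fun s => 1 + cos s + c * (1 - cos s)) ((c - 1) * sin s) s :=
    (((hasDerivAt_cos s).const_add 1).add
      (((hasDerivAt_cos s).const_sub 1).const_mul c)).congr_deriv (by ring)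
  have hu := (((hasDerivAt_sin s).const_mul (c - 1)).div hE' hE.ne').arctan
  refine ((hasDerivAt_id' s).add (hu.const_mul 2)).congr_deriv ?_
  simp only [dilationDenom, Pi.div_apply] at hD ⊢
  field_simp
  rw [sin_sq]
  ring

lemma hasDerivAt_dilationDenom (c s : ℝ) :
    HasDerivAt (dilationDenom c) (-(1 - c ^ 2) * sin s) s :=
  (((hasDerivAt_cos s).const_add 1).add
    (((hasDerivAt_cos s).const_sub 1).const_mul (c ^ 2))).congr_deriv (by ring)

lemma hasDerivAt_sin_div_dilationDenom_pow {c : ℝ} (hc : c ≠ 0) (n : ℕ) (s : ℝ) :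
    HasDerivAt (fun s => sin s / dilationDenom c s ^ n)
      ((cos s * dilationDenom c s + n * (1 - c ^ 2) * sin s ^ 2) / dilationDenom c s ^ (n + 1))
      s := by
  have hD := (dilationDenom_pos hc s).ne'
  refine ((hasDerivAt_sin s).fun_div ((hasDerivAt_dilationDenom c s).fun_pow n)
    (pow_ne_zero n hD)).congr_deriv ?_
  rcases n with _ | n
  · field_simp
    simp
  · simp only [Nat.add_sub_cancel]
    field_simp
    push_cast
    ring

noncomputable def energyPrimitive (c s : ℝ) : ℝ :=
  (16 * c ^ 4 * s + c * (1 + c ^ 2) * ((1 + c ^ 2) ^ 2 - 12 * c ^ 2) * profile c s)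
      / (1 - c ^ 2) ^ 4
    - 2 * c ^ 2 / (3 * (1 - c ^ 2) ^ 3) *
      ((3 * (1 + c ^ 2) ^ 2 + 32 * c ^ 2) * (sin s / dilationDenom c s)
        - 28 * c ^ 2 * (1 + c ^ 2) * (sin s / dilationDenom c s ^ 2)
        + 32 * c ^ 4 * (sin s / dilationDenom c s ^ 3))

lemma hasDerivAt_energyPrimitive {c : ℝ} (hc : 0 < c) (hc1 : c ≠ 1) (s : ℝ) :
    HasDerivAt (energyPrimitive c) ((2 * c * sin s / dilationDenom c s) ^ 4) s := by
  have hB := one_sub_sq_ne_zero hc.le hc1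
  have hD := (dilationDenom_pos hc.ne' s).ne'
  have G k := hasDerivAt_sin_div_dilationDenom_pow hc.ne' k s
  have G1 := G 1
  simp only [pow_one] at G1
  refine (((((hasDerivAt_id' s).const_mul _).fun_add
      ((hasDerivAt_profile hc s).const_mul _)).div_const _).fun_sub
    ((((G1.const_mul _).fun_sub ((G 2).const_mul _)).fun_add ((G 3).const_mul _)).const_mul _)
    ).congr_deriv ?_
  rw [div_pow, mul_pow, mul_pow, show sin s ^ 4 = (sin s ^ 2) ^ 2 by ring, sin_sq]
  push_cast
  simp only [dilationDenom] at hD ⊢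
  field_simp
  ring

lemma energyPrimitive_pi_sub_zero {c : ℝ} (hc : 0 < c) (hc1 : c ≠ 1) :
    energyPrimitive c π - energyPrimitive c 0 = π * c * (c ^ 2 + 4 * c + 1) / (c + 1) ^ 4 := by
  have hB := one_sub_sq_ne_zero hc.le hc1
  have : c + 1 ≠ 0 := by positivity
  simp only [energyPrimitive, profile_pi, profile_zero, sin_pi, sin_zero, zero_div]
  field_simp
  ring

lemma integral_two_mul_sin_div_dilationDenom_pow_four {c : ℝ} (hc : 0 < c) :
    ∫ s in (0:ℝ)..π, (2 * c * sin s / dilationDenom c s) ^ 4 =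
      π * c * (c ^ 2 + 4 * c + 1) / (c + 1) ^ 4 := by
  rcases eq_or_ne c 1 with rfl | hc1
  · have h : ∀ s, (2 * 1 * sin s / dilationDenom 1 s) ^ 4 = sin s ^ (2 * 2) := fun s => by
      simp only [dilationDenom]
      ring
    simp only [h, integral_sin_pow_even]
    norm_num [Finset.prod_range_succ]
    ring
  · have hint : Continuous fun s => (2 * c * sin s / dilationDenom c s) ^ 4 :=
      ((continuous_const.mul continuous_sin).div (continuous_dilationDenom c)
        fun s => (dilationDenom_pos hc.ne' s).ne').pow 4
    rw [intervalIntegral.integral_eq_sub_of_hasDerivAt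
      (fun s _ => hasDerivAt_energyPrimitive hc hc1 s) (hint.intervalIntegrable 0 π)]
    exact energyPrimitive_pi_sub_zero hc hc1

theorem stmt_13 (c : ℝ) (hc : 0 < c) :
    ∫ s in (0:ℝ)..π, (2 * c * tan (s / 2) / (1 + c ^ 2 * tan (s / 2) ^ 2)) ^ 4 =
      π * c * (c ^ 2 + 4 * c + 1) / (c + 1) ^ 4 := by
  simp only [two_mul_tan_half_div_eq]
  exact integral_two_mul_sin_div_dilationDenom_pow_four hc
end

section
/- Let m ≥ 5 be an integer. Then the function c ↦ ∫₀^π ( c·(1 + tan²(s/2)) / (1 + c²·tan²(s/2)) )² · (sin s)^{m−1} ds tends to 0 as c tends to 0 from the right. -/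
/-! With `t = tan (s/2)` one has `(1 + t²) sin² s = 4 sin² (s/2) ≤ 4`, and the denominator
`1 + c² t²` is at least `1`. Hence for `m - 1 ≥ 4` the integrand is bounded by
`c² ((1 + t²) sin² s)² ≤ 16 c²` uniformly in `s`, and the integral is `O(c²)`. -/

open Real Filter Topology

/-- Holds for every `x`: where `cos x = 0`, Lean's `tan x` is `0` and `sin (2 * x) = 0`. -/
theorem one_add_tan_sq_mul_sin_two_mul_sq_le (x : ℝ) :
    (1 + tan x ^ 2) * sin (2 * x) ^ 2 ≤ 4 := by
  rw [tan_eq_sin_div_cos, sin_two_mul]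
  rcases eq_or_ne (cos x) 0 with hcos | hcos
  · simp [hcos]
  · have hsq : (1 + (sin x / cos x) ^ 2) * (2 * sin x * cos x) ^ 2 = 4 * sin x ^ 2 := by
      field_simp
      linear_combination 4 * sin x ^ 2 * sin_sq_add_cos_sq x
    rw [hsq]
    nlinarith [sin_sq_le_one x]

theorem abs_sq_div_mul_sin_pow_le (c s : ℝ) {n : ℕ} (hn : 4 ≤ n) :
    |(c * (1 + tan (s / 2) ^ 2) / (1 + c ^ 2 * tan (s / 2) ^ 2)) ^ 2 * sin s ^ n| ≤
      16 * c ^ 2 := by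
  set A := 1 + tan (s / 2) ^ 2
  have hA : 0 ≤ A := by positivity
  have hdilation : |c * A / (1 + c ^ 2 * tan (s / 2) ^ 2)| ≤ |c| * A := by
    rw [abs_div, abs_mul, abs_of_nonneg hA]
    exact div_le_self (by positivity) (le_abs.mpr (Or.inl (by nlinarith)))
  have hsin : |sin s| ^ n ≤ sin s ^ 4 := by
    calc |sin s| ^ n ≤ |sin s| ^ 4 := pow_le_pow_of_le_one (abs_nonneg _) (abs_sin_le_one s) hn
      _ = sin s ^ 4 := by rw [← abs_pow, abs_of_nonneg (by positivity)]
  have hbound : A * sin s ^ 2 ≤ 4 := by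
    simpa only [mul_div_cancel₀ s two_ne_zero] using one_add_tan_sq_mul_sin_two_mul_sq_le (s / 2)
  calc |(c * A / (1 + c ^ 2 * tan (s / 2) ^ 2)) ^ 2 * sin s ^ n|
      = |c * A / (1 + c ^ 2 * tan (s / 2) ^ 2)| ^ 2 * |sin s| ^ n := by
        rw [abs_mul, abs_pow, abs_pow]
    _ ≤ (|c| * A) ^ 2 * sin s ^ 4 := by gcongr
    _ = c ^ 2 * (A * sin s ^ 2) ^ 2 := by rw [mul_pow, sq_abs]; ring
    _ ≤ c ^ 2 * 4 ^ 2 := by gcongr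
    _ = 16 * c ^ 2 := by ring

theorem stmt_15 (m : ℕ) (hm : 5 ≤ m) :
    Filter.Tendsto
      (fun c : ℝ => ∫ s in (0:ℝ)..π,
        (c * (1 + tan (s / 2) ^ 2) / (1 + c ^ 2 * tan (s / 2) ^ 2)) ^ 2 * sin s ^ (m - 1))
      (nhdsWithin 0 (Set.Ioi 0)) (nhds 0) := by
  have hbound (c : ℝ) : ‖∫ s in (0:ℝ)..π,
      (c * (1 + tan (s / 2) ^ 2) / (1 + c ^ 2 * tan (s / 2) ^ 2)) ^ 2 * sin s ^ (m - 1)‖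
      ≤ 16 * c ^ 2 * |π - 0| :=
    intervalIntegral.norm_integral_le_of_norm_le_const fun s _ ↦
      abs_sq_div_mul_sin_pow_le c s (by omega)
  have hlim : Tendsto (fun c : ℝ ↦ 16 * c ^ 2 * |π - 0|) (𝓝 0) (𝓝 0) := by
    simpa using ((continuous_pow 2).const_mul 16 |>.mul_const |π - 0|).tendsto 0
  exact (squeeze_zero_norm hbound hlim).mono_left nhdsWithin_le_nhds
end
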